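/- arXiv:1205.2992 — 2 statements merged into one kernel-verified Lean document; each statement's English description precedes it below -/
import Mathlib

section
/- Fix ν ≥ 1, integers 2 ≤ i_1 < i_2 < … < i_ν ≤ k and l_1, …, l_ν ≥ 0 with i_λ + l_λ < i_{λ+1} for 1 ≤ λ ≤ ν−1 and i_ν + l_ν ≤ k. For each 1 ≤ λ ≤ ν and 0 ≤ j ≤ l_λ define φ̄^λ_j : (ℝ^{m+1})^{k+1} → ℝ by φ̄^λ_j(x) = ⟨x_{i_λ+j} − x_{i_λ+j−1}, x_{i_λ+j−1} − x_{i_λ−2}⟩ (so φ̄^λ_0 = A_{i_λ−1}). At every point q ∈ C^k(m) satisfying φ̄^λ_j(q) = 0 for all λ and j, the map (ℝ^{m+1})^{k+1} → ℝ^{k + ν + l_1 + ⋯ + l_ν} whose components are Ψ_0, …, Ψ_{k−1} together with all the φ̄^λ_j has surjective Fréchet derivative at q. (This expresses that the RVT class C_{R^{h_0} V T^{l_1} R^{h_1} ⋯ V T^{l_ν} R^{h_ν}} is an analytic submanifold of C^k(m) of codimension ν + l_1 + ⋯ + l_ν.) -/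
/-
Translating the tail `x_p, …, x_k` of the chain by a vector `w` changes only the segment
`x_p - x_{p-1}`. The translation from `p = i + 1` by `x_{i+1} - x_i` is seen by `Ψ_i` and by no
other `Ψ`. The translation from `p = i_λ + j` by `x_{p-1} - x_{i_λ-2}` is invisible to every `Ψ`
(this is `φ̄^λ_j(q) = 0`) and to every `φ̄` whose index `i_μ + j'` is smaller than `p`, while
`φ̄^λ_j` sees it with weight `‖x_{p-1} - x_{i_λ-2}‖² = j + 1`, by Pythagoras along the chain of
mutually orthogonal unit segments. On these test vectors the derivative is triangular with
nonzero diagonal, hence surjective.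
-/
noncomputable section

open scoped RealInnerProductSpace

open Fin.NatCast

namespace ArticulatedArm

/-- `ℝ^{m+1}` with the Euclidean structure. -/
abbrev Vec (m : ℕ) : Type := EuclideanSpace ℝ (Fin (m + 1))

/-- `(ℝ^{m+1})^{k+1}` with the Euclidean (product) structure. -/
abbrev Tup (m k : ℕ) : Type := PiLp 2 (fun _ : Fin (k + 1) => Vec m)

/-- The segment vector `x_{i+1} - x_i`. -/
def seg (m k : ℕ) (x : Tup m k) (i : ℕ) : Vec m :=
  x ((i + 1 : ℕ) : Fin (k + 1)) - x ((i : ℕ) : Fin (k + 1))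

/-- The configuration space `C^k(m)`. -/
def Conf (m k : ℕ) : Set (Tup m k) := {x | ∀ i, i < k → ‖seg m k x i‖ = 1}

/-- `A_{i,j}(x) = ⟨x_{i+1} - x_i, x_{j+1} - x_j⟩`. -/
def AA (m k : ℕ) (x : Tup m k) (i j : ℕ) : ℝ := ⟪seg m k x i, seg m k x j⟫

/-- `A_i(x) = A_{i,i-1}(x)`. -/
def Acoef (m k : ℕ) (x : Tup m k) (i : ℕ) : ℝ := AA m k x i (i - 1)

/-- `Z_i(x)`: the tuple whose `i`-th component is `x_{i+1} - x_i` and the others `0`. -/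
def Zt (m k : ℕ) (x : Tup m k) (i : ℕ) : Tup m k :=
  WithLp.toLp 2 (fun l => if (l : ℕ) = i then seg m k x i else 0)

/-- `N_i(x)`: the tuple with `i`-th component `-(x_{i+1} - x_i)`, `(i+1)`-th component
`x_{i+1} - x_i`, and the others `0`. -/
def Nt (m k : ℕ) (x : Tup m k) (i : ℕ) : Tup m k :=
  WithLp.toLp 2 (fun l => if (l : ℕ) = i then -(seg m k x i)
    else if (l : ℕ) = i + 1 then seg m k x i else 0)

/-- `Y_n(x) = Σ_{i=0}^{n-1} (Π_{j=i+1}^{n-1} A_j(x)) Z_i(x)`. -/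
def Yt (m k : ℕ) (x : Tup m k) (n : ℕ) : Tup m k :=
  ∑ i ∈ Finset.range n, (∏ j ∈ Finset.Ico (i + 1) n, Acoef m k x j) • Zt m k x i

/-- `Ψ_i(x) = ‖x_{i+1} - x_i‖² - 1`. -/
def Psi (m k : ℕ) (i : ℕ) (x : Tup m k) : ℝ := ‖seg m k x i‖ ^ 2 - 1

/-- `e_r^{(i)}`: the tuple whose `i`-th component is the `r`-th standard basis
vector of `ℝ^{m+1}` and whose other components are `0`. -/
def et (m k : ℕ) (i : ℕ) (r : Fin (m + 1)) : Tup m k :=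
  WithLp.toLp 2 (fun l => if (l : ℕ) = i then EuclideanSpace.single r (1 : ℝ) else 0)

end ArticulatedArm

theorem LinearMap.surjective_of_triangular {K E ι : Type*} [Field K] [AddCommGroup E]
    [Module K E] [Finite ι] [DecidableEq ι] (L : E →ₗ[K] ι → K) (v : ι → E) (r : ι → ℕ)
    (hr : Function.Injective r) (hdiag : ∀ i, L (v i) i ≠ 0)
    (hzero : ∀ i j, r i < r j → L (v i) j = 0) :
    Function.Surjective L := by
  have hsingle : ∀ n i, r i = n → ∀ c : K, Pi.single i c ∈ LinearMap.range L := by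
    intro n
    induction n using Nat.strong_induction_on with
    | _ n ih =>
      rintro i rfl c
      have hlower : ∀ j ≠ i, Pi.single j (L (v i) j) ∈ LinearMap.range L := by
        intro j hji
        rcases (hr.ne hji).lt_or_gt with hlt | hgt
        · exact ih _ hlt j rfl _
        · simp [hzero i j hgt]
      have hdiag_mem : Pi.single i (L (v i) i) ∈ LinearMap.range L := by
        cases nonempty_fintype ι
        have hsum := Finset.univ_sum_single (L (v i))
        rw [← Finset.add_sum_erase _ _ (Finset.mem_univ i)] at hsum
        rw [eq_sub_of_add_eq hsum]
        exact sub_mem (LinearMap.mem_range_self L _)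
          (Submodule.sum_mem _ fun j hj => hlower j (Finset.ne_of_mem_erase hj))
      have hc := Submodule.smul_mem _ (c / L (v i) i) hdiag_mem
      rwa [← Pi.single_smul', smul_eq_mul, div_mul_cancel₀ _ (hdiag i)] at hc
  intro f
  induction f using Pi.single_induction with
  | zero => exact ⟨0, map_zero L⟩
  | add f g hf hg => exact (LinearMap.range L).add_mem hf hg
  | single i c => exact hsingle _ i rfl c

theorem norm_sub_sq_eq_of_orthogonal_unit_steps {F : Type*} [NormedAddCommGroup F]
    [InnerProductSpace ℝ F] (p : ℕ → F) (n : ℕ) (hunit : ∀ t < n, ‖p (t + 1) - p t‖ = 1)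
    (horth : ∀ t, t + 1 < n → ⟪p (t + 2) - p (t + 1), p (t + 1) - p 0⟫ = 0) :
    ‖p n - p 0‖ ^ 2 = n := by
  induction n with
  | zero => simp
  | succ n ih =>
    have hstep : ⟪p (n + 1) - p n, p n - p 0⟫ = 0 := by
      cases n with
      | zero => simp
      | succ t => exact horth t (by omega)
    rw [← sub_add_sub_cancel _ (p n), norm_add_sq_real, hstep, hunit n (by omega),
      ih (fun t ht => hunit t (by omega)) (fun t ht => horth t (by omega))]
    push_cast
    ring

namespace ArticulatedArm

section Chain

variable {m k : ℕ}

def pointDiff (m k a b : ℕ) : Tup m k →L[ℝ] Vec m :=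
  PiLp.proj (𝕜 := ℝ) 2 (fun _ : Fin (k + 1) => Vec m) (a : Fin (k + 1))
    - PiLp.proj (𝕜 := ℝ) 2 (fun _ : Fin (k + 1) => Vec m) (b : Fin (k + 1))

theorem pointDiff_apply (a b : ℕ) (x : Tup m k) :
    pointDiff m k a b x = x (a : Fin (k + 1)) - x (b : Fin (k + 1)) := rfl

/-- `φ̄^λ_j` is `bend (i_λ + j) (i_λ - 2)`. -/
def bend (m k P B : ℕ) (x : Tup m k) : ℝ :=
  ⟪pointDiff m k P (P - 1) x, pointDiff m k (P - 1) B x⟫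

theorem norm_pointDiff_sq_of_bend_eq_zero {q : Tup m k} (hq : q ∈ Conf m k)
    {I j : ℕ} (hI : 2 ≤ I) (hj : I + j ≤ k) (hbend : ∀ t < j, bend m k (I + t) (I - 2) q = 0) :
    ‖pointDiff m k (I + j - 1) (I - 2) q‖ ^ 2 = j + 1 := by
  set p : ℕ → Vec m := fun s => q ((I - 2 + s : ℕ) : Fin (k + 1))
  have hp : pointDiff m k (I + j - 1) (I - 2) q = p (j + 1) - p 0 := by
    simp only [pointDiff_apply, p]
    rw [show I - 2 + (j + 1) = I + j - 1 by omega]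
    rfl
  rw [hp, norm_sub_sq_eq_of_orthogonal_unit_steps p (j + 1)]
  · push_cast; ring
  · intro t ht
    exact hq (I - 2 + t) (by omega)
  · intro t ht
    have h := hbend t (by omega)
    simp only [bend, pointDiff_apply] at h
    simp only [p]
    rwa [show I - 2 + (t + 2) = I + t by omega, show I - 2 + (t + 1) = I + t - 1 by omega]

def psiDeriv (q : Tup m k) (i : ℕ) : Tup m k →L[ℝ] ℝ :=
  2 • (innerSL ℝ (seg m k q i)).comp (pointDiff m k (i + 1) i)

def bendDeriv (q : Tup m k) (P B : ℕ) : Tup m k →L[ℝ] ℝ :=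
  (fderivInnerCLM ℝ (pointDiff m k P (P - 1) q, pointDiff m k (P - 1) B q)).comp
    ((pointDiff m k P (P - 1)).prod (pointDiff m k (P - 1) B))

theorem hasFDerivAt_psi (q : Tup m k) (i : ℕ) :
    HasFDerivAt (Psi m k i) (psiDeriv q i) q := by
  show HasFDerivAt (fun x => ‖pointDiff m k (i + 1) i x‖ ^ 2 - 1) _ q
  exact (pointDiff m k (i + 1) i).hasFDerivAt.norm_sq.sub_const 1

theorem hasFDerivAt_bend (q : Tup m k) (P B : ℕ) :
    HasFDerivAt (bend m k P B) (bendDeriv q P B) q :=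
  (pointDiff m k P (P - 1)).hasFDerivAt.inner ℝ (pointDiff m k (P - 1) B).hasFDerivAt

theorem psiDeriv_apply (q v : Tup m k) (i : ℕ) :
    psiDeriv q i v = 2 * ⟪seg m k q i, seg m k v i⟫ := by
  simp only [psiDeriv, smul_apply, ContinuousLinearMap.comp_apply, coe_innerSL_apply,
    nsmul_eq_mul, Nat.cast_ofNat]
  rfl

theorem bendDeriv_apply (q v : Tup m k) (P B : ℕ) :
    bendDeriv q P B v = ⟪pointDiff m k P (P - 1) q, pointDiff m k (P - 1) B v⟫
      + ⟪pointDiff m k P (P - 1) v, pointDiff m k (P - 1) B q⟫ := by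
  simp [bendDeriv, fderivInnerCLM_apply]

def shiftFrom (m k p : ℕ) (w : Vec m) : Tup m k :=
  WithLp.toLp 2 (fun l => if p ≤ (l : ℕ) then w else 0)

theorem pointDiff_shiftFrom {a b : ℕ} (ha : a ≤ k) (hb : b ≤ k) (p : ℕ) (w : Vec m) :
    pointDiff m k a b (shiftFrom m k p w) = (if p ≤ a then w else 0) - if p ≤ b then w else 0 := by
  simp [pointDiff_apply, shiftFrom, Nat.mod_eq_of_lt, ha, hb]

theorem seg_shiftFrom {s : ℕ} (hs : s < k) (p : ℕ) (w : Vec m) :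
    seg m k (shiftFrom m k p w) s = if p = s + 1 then w else 0 := by
  rw [seg, ← pointDiff_apply, pointDiff_shiftFrom hs (by omega)]
  split_ifs <;> first | omega | simp

theorem psiDeriv_shiftFrom (q : Tup m k) {s : ℕ} (hs : s < k) (p : ℕ) (w : Vec m) :
    psiDeriv q s (shiftFrom m k p w) = if p = s + 1 then 2 * ⟪seg m k q s, w⟫ else 0 := by
  rw [psiDeriv_apply, seg_shiftFrom hs]
  split_ifs <;> simp

theorem bendDeriv_shiftFrom_of_lt (q : Tup m k) {P B p : ℕ} (hB : B < P) (hP : P < p)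
    (hp : p ≤ k) (w : Vec m) : bendDeriv q P B (shiftFrom m k p w) = 0 := by
  rw [bendDeriv_apply, pointDiff_shiftFrom (by omega) (by omega),
    pointDiff_shiftFrom (by omega) (by omega), if_neg (by omega), if_neg (by omega),
    if_neg (by omega)]
  simp

theorem bendDeriv_shiftFrom_self (q : Tup m k) {P B : ℕ} (hB : B < P) (hP : P ≤ k)
    (w : Vec m) : bendDeriv q P B (shiftFrom m k P w) = ⟪w, pointDiff m k (P - 1) B q⟫ := by
  rw [bendDeriv_apply, pointDiff_shiftFrom hP (by omega),
    pointDiff_shiftFrom (by omega) (by omega), if_pos le_rfl, if_neg (by omega), if_neg (by omega)]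
  simp

theorem surjective_psiDeriv_prod_bendDeriv {ι : Type*} [Finite ι] {q : Tup m k}
    (hq : q ∈ Conf m k) (tip base : ι → ℕ) (htip : Function.Injective tip)
    (htip_le : ∀ p, tip p ≤ k) (hbase : ∀ p, base p < tip p)
    (hbend : ∀ p, bend m k (tip p) (base p) q = 0)
    (hne : ∀ p, pointDiff m k (tip p - 1) (base p) q ≠ 0) :
    Function.Surjective ((ContinuousLinearMap.pi fun i : Fin k => psiDeriv q i).prod
      (ContinuousLinearMap.pi fun p => bendDeriv q (tip p) (base p))) := by
  classical
  let e := LinearEquiv.sumArrowLequivProdArrow (Fin k) ι ℝ ℝ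
  let L : Tup m k →ₗ[ℝ] Fin k ⊕ ι → ℝ :=
    e.symm.toLinearMap ∘ₗ ((ContinuousLinearMap.pi fun i : Fin k => psiDeriv q i).prod
      (ContinuousLinearMap.pi fun p => bendDeriv q (tip p) (base p))).toLinearMap
  have hL : ∀ v, L v = Sum.elim (fun i : Fin k => psiDeriv q i v)
      fun p => bendDeriv q (tip p) (base p) v :=
    fun v => by ext (i | p) <;> rfl
  rw [← EquivLike.comp_surjective _ e.symm]
  -- The `Ψ` test vectors get the largest ranks; the `φ̄` ones are ranked by decreasing tip.
  refine LinearMap.surjective_of_triangular L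
    (Sum.elim (fun i => shiftFrom m k (i + 1) (seg m k q i))
      fun p => shiftFrom m k (tip p) (pointDiff m k (tip p - 1) (base p) q))
    (Sum.elim (fun i => k + i) fun p => k - tip p) ?_ ?_ ?_
  · rintro (i | p) (i' | p') h <;> simp only [Sum.elim_inl, Sum.elim_inr] at h
    · rw [Fin.ext (by omega : (i : ℕ) = i')]
    · have := hbase p'; omega
    · have := hbase p; omega
    · rw [htip (by have := htip_le p; have := htip_le p'; omega : tip p = tip p')]
  · rintro (i | p) <;> simp only [hL, Sum.elim_inl, Sum.elim_inr]
    · rw [psiDeriv_shiftFrom q i.isLt, if_pos rfl, real_inner_self_eq_norm_sq, hq i i.isLt]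
      norm_num
    · rw [bendDeriv_shiftFrom_self q (hbase p) (htip_le p)]
      exact inner_self_ne_zero.2 (hne p)
  · rintro (i | p) (s | p') h <;> simp only [hL, Sum.elim_inl, Sum.elim_inr] at h ⊢
    · rw [psiDeriv_shiftFrom q s.isLt, if_neg (by omega)]
    · have := hbase p'; omega
    · rw [psiDeriv_shiftFrom q s.isLt]
      split_ifs with hs
      · have hseg : seg m k q s = pointDiff m k (tip p) (tip p - 1) q := by rw [hs]; rfl
        rw [hseg]
        exact mul_eq_zero_of_right 2 (hbend p)
      · rfl
    · exact bendDeriv_shiftFrom_of_lt q (hbase p') (by have := htip_le p; omega) (htip_le p) _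

end Chain

section Blocks

variable {ν : ℕ} {idx lnum : Fin ν → ℕ}

theorem add_lnum_lt_idx_of_lt (hmono : StrictMono idx)
    (hgap : ∀ a b : Fin ν, (b : ℕ) = (a : ℕ) + 1 → idx a + lnum a < idx b) {a b : Fin ν}
    (hab : a < b) : idx a + lnum a < idx b :=
  calc idx a + lnum a < idx ⟨a + 1, by omega⟩ := hgap a _ rfl
    _ ≤ idx b := hmono.monotone hab

theorem add_lnum_le_of_le (hmono : StrictMono idx)
    (hgap : ∀ a b : Fin ν, (b : ℕ) = (a : ℕ) + 1 → idx a + lnum a < idx b) {a b : Fin ν}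
    (hab : a ≤ b) : idx a + lnum a ≤ idx b + lnum b := by
  rcases hab.lt_or_eq with hlt | rfl
  · exact (add_lnum_lt_idx_of_lt hmono hgap hlt).le.trans (Nat.le_add_right _ _)
  · rfl

theorem injective_idx_add (hmono : StrictMono idx)
    (hgap : ∀ a b : Fin ν, (b : ℕ) = (a : ℕ) + 1 → idx a + lnum a < idx b) :
    Function.Injective fun p : (a : Fin ν) × Fin (lnum a + 1) => idx p.1 + p.2 := by
  rintro ⟨a, j⟩ ⟨b, j'⟩ h
  simp only at h
  have hj := j.isLt
  have hj' := j'.isLt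
  obtain rfl : a = b := by
    by_contra hne
    rcases lt_or_gt_of_ne hne with hab | hba
    · have := add_lnum_lt_idx_of_lt hmono hgap hab; omega
    · have := add_lnum_lt_idx_of_lt hmono hgap hba; omega
  obtain rfl : j = j' := Fin.ext (by omega)
  rfl

end Blocks

/-- for indices `2 ≤ i_1 < … < i_ν ≤ k` and lengths `l_1,…,l_ν ≥ 0` with
`i_λ + l_λ < i_{λ+1}` and `i_ν + l_ν ≤ k`, and
`φ̄^λ_j(x) = ⟨x_{i_λ+j} - x_{i_λ+j-1}, x_{i_λ+j-1} - x_{i_λ-2}⟩`, at every `q ∈ C^k(m)`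
where all the `φ̄^λ_j` vanish, the map with components `Ψ_0,…,Ψ_{k-1}` together with all the
`φ̄^λ_j` has surjective Fréchet derivative at `q`. -/
theorem statement10 (m k ν : ℕ) (hν : 1 ≤ ν)
    (idx lnum : Fin ν → ℕ)
    (h2 : ∀ a : Fin ν, 2 ≤ idx a)
    (hmono : StrictMono idx)
    (hgap : ∀ a b : Fin ν, (b : ℕ) = (a : ℕ) + 1 → idx a + lnum a < idx b)
    (hlast : idx ⟨ν - 1, by omega⟩ + lnum ⟨ν - 1, by omega⟩ ≤ k) :
    let phibar : ℕ → ℕ → Tup m k → ℝ := fun I J x =>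
      ⟪x ((I + J : ℕ) : Fin (k + 1)) - x ((I + J - 1 : ℕ) : Fin (k + 1)),
        x ((I + J - 1 : ℕ) : Fin (k + 1)) - x ((I - 2 : ℕ) : Fin (k + 1))⟫
    ∀ q ∈ Conf m k, (∀ (a : Fin ν) (j : ℕ), j ≤ lnum a → phibar (idx a) j q = 0) →
      ∃ D : Tup m k →L[ℝ] ((Fin k → ℝ) × (((a : Fin ν) × Fin (lnum a + 1)) → ℝ)),
        HasFDerivAt (fun x : Tup m k =>
          ((fun i : Fin k => Psi m k (i : ℕ) x),
           (fun p : (a : Fin ν) × Fin (lnum a + 1) => phibar (idx p.1) (p.2 : ℕ) x))) D q ∧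
        Function.Surjective D := by
  intro phibar q hq hvan
  have htip_le : ∀ (a : Fin ν) (j : Fin (lnum a + 1)), idx a + j ≤ k := fun a j =>
    calc idx a + j ≤ idx a + lnum a := by have := j.isLt; omega
      _ ≤ k := (add_lnum_le_of_le hmono hgap
        (Fin.le_def.2 (Nat.le_sub_one_of_lt a.isLt))).trans hlast
  have hne : ∀ p : (a : Fin ν) × Fin (lnum a + 1),
      pointDiff m k (idx p.1 + p.2 - 1) (idx p.1 - 2) q ≠ 0 := by
    rintro ⟨a, j⟩
    have hj := j.isLt
    rw [← norm_ne_zero_iff, ← pow_ne_zero_iff two_ne_zero,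
      norm_pointDiff_sq_of_bend_eq_zero hq (h2 a) (htip_le a j)
        fun t ht => hvan a t (by omega)]
    positivity
  exact ⟨_, (hasFDerivAt_pi.2 fun i : Fin k => hasFDerivAt_psi q i).prodMk
    (hasFDerivAt_pi.2 fun p => hasFDerivAt_bend q (idx p.1 + p.2) (idx p.1 - 2)),
    surjective_psiDeriv_prod_bendDeriv hq _ _ (injective_idx_add hmono hgap)
      (fun p => htip_le p.1 p.2)
      (fun p => by have := h2 p.1; omega) (fun p => hvan p.1 p.2 (Nat.lt_succ_iff.1 p.2.isLt))
      hne⟩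

end ArticulatedArm
end
end

section
/- Let l ≥ 2, let q = (x_0, …, x_l) ∈ C^l(m), set q' = (x_0, …, x_{l−1}) ∈ C^{l−1}(m) and z = x_l − x_{l−1} ∈ S^m. In (ℝ^{m+1})^l, let v_r(q') = (x_{l−1}^r − x_{l−2}^r)·Y_{l−1}(q') + e_r^{(l−1)} (r = 1, …, m+1) and let w = Σ_{r=1}^{m+1} z^r · v_r(q'). Then w lies in the vertical subspace L_{l−1}(q') = { v ∈ (ℝ^{m+1})^l : v is supported in the (l−1)-th component and its (l−1)-th component is orthogonal to x_{l−1} − x_{l−2} } if and only if A_{l−1}(q) = ⟨x_l − x_{l−1}, x_{l−1} − x_{l−2}⟩ = 0, i.e. if and only if the segments [x_{l−2}, x_{l−1}] and [x_{l−1}, x_l] of the articulated arm are orthogonal at x_{l−1}. -/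
noncomputable section

open scoped RealInnerProductSpace

open Fin.NatCast

namespace ArticulatedArm

/-! Expanding the sum, `w = ⟨z, x_{l-1} - x_{l-2}⟩ • Y_{l-1}(q') + z e^{(l-1)}`, where
`z e^{(l-1)}` is `z` placed in component `l - 1`. Since `Y_{l-1}(q')` vanishes in that
component, the `(l-1)`-th component of `w` is `z` itself, and the other components are
multiples of `⟨z, x_{l-1} - x_{l-2}⟩`; both conditions of verticality thus reduce to
`A_{l-1}(q) = 0`. -/

theorem sum_smul_et {m : ℕ} (k i : ℕ) (z : Vec m) :
    ∑ r, z r • et m k i r =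
      WithLp.toLp 2 (fun l : Fin (k + 1) => if (l : ℕ) = i then z else 0) := by
  ext l j
  by_cases hl : (l : ℕ) = i <;> simp [et, hl, Pi.single_apply]

theorem Yt_apply_of_le {m k : ℕ} (x : Tup m k) {n : ℕ} {l : Fin (k + 1)} (hl : n ≤ l) :
    Yt m k x n l = 0 := by
  simp only [Yt, WithLp.ofLp_sum, Finset.sum_apply, PiLp.smul_apply, Zt]
  refine Finset.sum_eq_zero fun i hi => ?_
  rw [if_neg (by grind), smul_zero]

theorem sum_smul_smul_add {m : ℕ} {E : Type*} [AddCommGroup E] [Module ℝ E]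
    (z s : Vec m) (y : E) (e : Fin (m + 1) → E) :
    ∑ r, z r • (s r • y + e r) = ⟪z, s⟫ • y + ∑ r, z r • e r := by
  simp only [smul_add, smul_smul, Finset.sum_add_distrib, ← Finset.sum_smul,
    PiLp.inner_apply, RCLike.inner_apply, conj_trivial, mul_comm]

theorem statement18_general (m n : ℕ)
    (q : Tup m (n + 2)) :
    let q' : Tup m (n + 1) := WithLp.toLp 2 (fun i : Fin (n + 2) => q (Fin.castSucc i))
    let z : Vec m := q ((n + 2 : ℕ) : Fin (n + 3)) - q ((n + 1 : ℕ) : Fin (n + 3))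
    let v : Fin (m + 1) → Tup m (n + 1) :=
      fun r => (seg m (n + 1) q' n r) • Yt m (n + 1) q' (n + 1) + et m (n + 1) (n + 1) r
    let w : Tup m (n + 1) := ∑ r : Fin (m + 1), (z r) • v r
    ((∀ l : Fin (n + 2), (l : ℕ) ≠ n + 1 → w l = 0) ∧
        ⟪w ((n + 1 : ℕ) : Fin (n + 2)), seg m (n + 1) q' n⟫ = 0) ↔
      ⟪z, seg m (n + 1) q' n⟫ = 0 := by
  intro q' z v w
  set s := seg m (n + 1) q' n
  have hw : w = ⟪z, s⟫ • Yt m (n + 1) q' (n + 1) +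
      WithLp.toLp 2 (fun l : Fin (n + 2) => if (l : ℕ) = n + 1 then z else 0) := by
    rw [← sum_smul_et, ← sum_smul_smul_add]
  have htop : (((n + 1 : ℕ) : Fin (n + 2)) : ℕ) = n + 1 := Fin.val_cast_of_lt (by omega)
  have hw_top : w ((n + 1 : ℕ) : Fin (n + 2)) = z := by
    rw [hw, PiLp.add_apply, PiLp.smul_apply, Yt_apply_of_le _ htop.ge, smul_zero, zero_add]
    exact if_pos htop
  have hw_low (l : Fin (n + 2)) (hl : (l : ℕ) ≠ n + 1) :
      w l = ⟪z, s⟫ • Yt m (n + 1) q' (n + 1) l := by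
    simp [hw, hl]
  rw [hw_top]
  refine ⟨And.right, fun h => ⟨fun l hl => ?_, h⟩⟩
  rw [hw_low l hl, h, zero_smul]

/-- for `l = n + 2 ≥ 2`, `q = (x_0,…,x_l) ∈ C^l(m)`, `q' = (x_0,…,x_{l-1})`,
`z = x_l - x_{l-1} ∈ S^m`, `v_r(q') = (x_{l-1}^r - x_{l-2}^r)·Y_{l-1}(q') + e_r^{(l-1)}`, and
`w = Σ_r z^r·v_r(q')`, the vector `w` lies in the vertical subspace `L_{l-1}(q')` if and only
if `A_{l-1}(q) = ⟨x_l - x_{l-1}, x_{l-1} - x_{l-2}⟩ = 0`, i.e. iff the segments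
`[x_{l-2}, x_{l-1}]` and `[x_{l-1}, x_l]` of the articulated arm are orthogonal at
`x_{l-1}`. -/
theorem statement18 (m n : ℕ) (hm : 2 ≤ m)
    (q : Tup m (n + 2)) (hq : q ∈ Conf m (n + 2)) :
    let q' : Tup m (n + 1) := WithLp.toLp 2 (fun i : Fin (n + 2) => q (Fin.castSucc i))
    let z : Vec m := q ((n + 2 : ℕ) : Fin (n + 3)) - q ((n + 1 : ℕ) : Fin (n + 3))
    let v : Fin (m + 1) → Tup m (n + 1) :=
      fun r => (seg m (n + 1) q' n r) • Yt m (n + 1) q' (n + 1) + et m (n + 1) (n + 1) r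
    let w : Tup m (n + 1) := ∑ r : Fin (m + 1), (z r) • v r
    ((∀ l : Fin (n + 2), (l : ℕ) ≠ n + 1 → w l = 0) ∧
        ⟪w ((n + 1 : ℕ) : Fin (n + 2)), seg m (n + 1) q' n⟫ = 0) ↔
      ⟪z, seg m (n + 1) q' n⟫ = 0 :=
  statement18_general m n q

end ArticulatedArm
end
end
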